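/- If the curvature operator of the second kind of an algebraic curvature tensor is nonnegative (positive semidefinite) or nonpositive, and its kernel contains all mixed tensors eⁱ⊗eʲ + eʲ⊗eⁱ of a nontrivial orthogonal splitting V = V₁ ⊕ V₂ coming from a product curvature tensor, and additionally the Weitzenböck curvature term of the volume form of V₁ vanishes, then the curvature tensor is zero. -/

import Mathlib

/-- An algebraic curvature tensor on `ℝⁿ`. -/
structure CurvTensor (n : ℕ) where
  R : Fin n → Fin n → Fin n → Fin n → ℝ
  antisymm_fst : ∀ i j k l, R j i k l = - R i j k l
  antisymm_snd : ∀ i j k l, R i j l k = - R i j k l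
  pair_symm : ∀ i j k l, R k l i j = R i j k l
  bianchi : ∀ i j k l, R i j k l + R j k i l + R k i j l = 0

/-- The Ricci curvature of an algebraic curvature tensor. -/
noncomputable def ricci {n : ℕ} (T : CurvTensor n) (a b : Fin n) : ℝ := ∑ i, T.R a i b i

/-- The scalar curvature of an algebraic curvature tensor. -/
noncomputable def scalCurv {n : ℕ} (T : CurvTensor n) : ℝ := ∑ a, ricci T a a

/-- The curvature operator of the second kind,
`𝓡(h) = R̄(h) + ⟨Ric, h⟩ g / n` on trace-free symmetric tensors. -/
noncomputable def calR {n : ℕ} (T : CurvTensor n) (h : Matrix (Fin n) (Fin n) ℝ) :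
    Matrix (Fin n) (Fin n) ℝ :=
  Matrix.of fun i j =>
    (∑ k, ∑ l, T.R i k l j * h k l) +
      (∑ k, ∑ l, ricci T k l * h k l) / n * (if i = j then 1 else 0)

/-- The Euclidean inner product of `(0,2)`-tensors. -/
noncomputable def inp {n : ℕ} (A B : Matrix (Fin n) (Fin n) ℝ) : ℝ := ∑ i, ∑ j, A i j * B i j

/-- The symmetrized tensor `eⁱ⊗eʲ + eʲ⊗eⁱ`. -/
noncomputable def Esym {n : ℕ} (i j : Fin n) : Matrix (Fin n) (Fin n) ℝ :=
  Matrix.single i j 1 + Matrix.single j i 1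

/-!
Replacing `R` by `-R` we may assume `𝓡 ≥ 0`. Then every eigenvalue `λ_α` is `≥ 0`, and so is
every `R_abab = ½ ⟨𝓡(eᵃ ⊙ eᵇ), eᵃ ⊙ eᵇ⟩`; hence Ricci and scalar curvature are `≥ 0` and all three
Weitzenböck summands are `≥ 0`. Their vanishing forces `scal = 0`, hence `R_abab = 0` for all
`a, b`. So every `eᵃ ⊙ eᵇ` is isotropic for the nonnegative form `⟨𝓡 h, h⟩` and lies in its
radical, which says `R_abcd + R_acbd = 0`. A curvature tensor antisymmetric in its middle pair is
totally antisymmetric, and then the Bianchi identity makes it vanish.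
-/

section Inp
variable {n : ℕ} (A B C : Matrix (Fin n) (Fin n) ℝ)

lemma inp_add_left : inp (A + B) C = inp A C + inp B C := by
  simp [inp, add_mul, Finset.sum_add_distrib]

lemma inp_add_right : inp A (B + C) = inp A B + inp A C := by
  simp [inp, mul_add, Finset.sum_add_distrib]

lemma inp_sub_left : inp (A - B) C = inp A C - inp B C := by
  simp [inp, sub_mul, Finset.sum_sub_distrib]

lemma inp_sub_right : inp A (B - C) = inp A B - inp A C := by
  simp [inp, mul_sub, Finset.sum_sub_distrib]

lemma inp_neg_left : inp (-A) B = -inp A B := by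
  simp [inp, Finset.sum_neg_distrib]

lemma inp_smul_left (c : ℝ) : inp (c • A) B = c * inp A B := by
  simp [inp, Finset.mul_sum, mul_assoc]

lemma inp_Esym_right (a b : Fin n) : inp A (Esym a b) = A a b + A b a := by
  simp [inp, Esym, Matrix.single, mul_add, Finset.sum_add_distrib, ite_and]

end Inp

lemma isSymm_Esym {n : ℕ} (a b : Fin n) : (Esym a b).IsSymm := by
  simp [Esym, Matrix.IsSymm, Matrix.transpose_add, add_comm]

lemma trace_Esym {n : ℕ} {a b : Fin n} (hab : a ≠ b) : Matrix.trace (Esym a b) = 0 := by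
  simp [Esym, hab, hab.symm]

/-- `sqNormActVolForm p A = |A ω|²` for the volume form `ω = e¹ ∧ ⋯ ∧ eᵖ`, where
`(A ω)(X₁, …, Xₚ) = ∑ᵢ ω(X₁, …, A Xᵢ, …, Xₚ)`. -/
noncomputable def sqNormActVolForm {n : ℕ} (p : ℕ) (A : Matrix (Fin n) (Fin n) ℝ) : ℝ :=
  (∑ m : Fin n, if (m : ℕ) < p then A m m else 0) ^ 2 +
    ∑ m : Fin n, ∑ k : Fin n, if (m : ℕ) < p ∧ p ≤ (k : ℕ) then (A m k) ^ 2 else 0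

lemma sqNormActVolForm_nonneg {n : ℕ} (p : ℕ) (A : Matrix (Fin n) (Fin n) ℝ) :
    0 ≤ sqNormActVolForm p A := by
  unfold sqNormActVolForm
  refine add_nonneg (sq_nonneg _) (Finset.sum_nonneg fun m _ => Finset.sum_nonneg fun k _ => ?_)
  split_ifs
  exacts [sq_nonneg _, le_rfl]

noncomputable def partialRicciTrace {n : ℕ} (p : ℕ) (T : CurvTensor n) : ℝ :=
  ∑ j : Fin n, if (j : ℕ) < p then ricci T j j else 0

namespace CurvTensor
variable {n : ℕ}

instance : Neg (CurvTensor n) :=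
  ⟨fun T =>
    { R := fun i j k l => -T.R i j k l
      antisymm_fst := fun i j k l => by rw [T.antisymm_fst]
      antisymm_snd := fun i j k l => by rw [T.antisymm_snd]
      pair_symm := fun i j k l => by rw [T.pair_symm]
      bianchi := fun i j k l => by linarith [T.bianchi i j k l] }⟩

variable (T : CurvTensor n)

lemma R_self_left (i k l : Fin n) : T.R i i k l = 0 := by
  linarith [T.antisymm_fst i i k l]

lemma R_self_right (i j k : Fin n) : T.R i j k k = 0 := by
  linarith [T.antisymm_snd i j k k]

lemma R_swap_pairs (i j k l : Fin n) : T.R j i l k = T.R i j k l := by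
  rw [T.antisymm_fst, T.antisymm_snd, neg_neg]

lemma R_rev (i j k l : Fin n) : T.R l k j i = T.R i j k l := by
  rw [T.R_swap_pairs, T.pair_symm]

@[simp]
lemma neg_R (i j k l : Fin n) : (-T).R i j k l = -T.R i j k l := rfl

lemma ricci_neg (a b : Fin n) : ricci (-T) a b = -ricci T a b := by
  simp [ricci, Finset.sum_neg_distrib]

lemma scalCurv_neg : scalCurv (-T) = -scalCurv T := by
  simp [scalCurv, ricci_neg, Finset.sum_neg_distrib]

lemma calR_neg (h : Matrix (Fin n) (Fin n) ℝ) : calR (-T) h = -calR T h := by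
  ext i j
  simp only [calR, Matrix.of_apply, Matrix.neg_apply, neg_R, ricci_neg, neg_mul,
    Finset.sum_neg_distrib]
  ring

lemma calR_add (h h' : Matrix (Fin n) (Fin n) ℝ) : calR T (h + h') = calR T h + calR T h' := by
  ext i j
  simp only [calR, Matrix.of_apply, Matrix.add_apply, mul_add, Finset.sum_add_distrib]
  ring

lemma calR_sub (h h' : Matrix (Fin n) (Fin n) ℝ) : calR T (h - h') = calR T h - calR T h' := by
  ext i j
  simp only [calR, Matrix.of_apply, Matrix.sub_apply, mul_sub, Finset.sum_sub_distrib]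
  ring

lemma calR_Esym_apply {i j : Fin n} (hij : i ≠ j) (a b : Fin n) :
    calR T (Esym a b) i j = T.R i a b j + T.R i b a j := by
  simp [calR, hij, Esym, Matrix.single, mul_add, Finset.sum_add_distrib, ite_and]

lemma inp_calR_Esym (a b : Fin n) {c d : Fin n} (hcd : c ≠ d) :
    inp (calR T (Esym a b)) (Esym c d) = 2 * (T.R c a b d + T.R c b a d) := by
  rw [inp_Esym_right, T.calR_Esym_apply hcd, T.calR_Esym_apply hcd.symm, T.R_rev d a b c,
    T.R_rev d b a c]
  ring

lemma partialRicciTrace_neg (p : ℕ) : partialRicciTrace p (-T) = -partialRicciTrace p T := by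
  simp only [partialRicciTrace, ricci_neg, ← Finset.sum_neg_distrib]
  exact Finset.sum_congr rfl fun j _ => by split_ifs <;> simp

def CalRNonneg : Prop :=
  ∀ h : Matrix (Fin n) (Fin n) ℝ, h.IsSymm → Matrix.trace h = 0 → 0 ≤ inp (calR T h) h

lemma calRNonneg_neg
    (hT : ∀ h : Matrix (Fin n) (Fin n) ℝ, h.IsSymm → Matrix.trace h = 0 → inp (calR T h) h ≤ 0) :
    (-T).CalRNonneg := fun h hs ht => by
  rw [calR_neg, inp_neg_left]
  exact neg_nonneg.mpr (hT h hs ht)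

lemma inp_calR_Esym_self {a b : Fin n} (hab : a ≠ b) :
    inp (calR T (Esym a b)) (Esym a b) = 2 * T.R a b a b := by
  rw [inp_calR_Esym _ _ _ hab, R_self_left, zero_add]

lemma eq_zero_of_R_add_R_swap_middle
    (h : ∀ a b c d, b ≠ c → a ≠ d → T.R a b c d + T.R a c b d = 0) (a b c d : Fin n) :
    T.R a b c d = 0 := by
  have hmid : ∀ a b d, T.R a b b d = 0 := by
    intro a b d
    obtain rfl | hab := eq_or_ne a b
    · exact T.R_self_left a a d
    obtain rfl | hbd := eq_or_ne b d
    · exact T.R_self_right a b b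
    have h' := h b a b d hab hbd
    rw [T.R_self_left, add_zero] at h'
    rw [T.antisymm_fst, h', neg_zero]
  have hanti : ∀ a b c d, T.R a c b d = -T.R a b c d := by
    intro a b c d
    obtain rfl | hbc := eq_or_ne b c
    · rw [hmid, neg_zero]
    obtain rfl | had := eq_or_ne a d
    · rw [T.pair_symm b a a c, T.pair_symm c a a b, hmid, hmid, neg_zero]
    linarith [h a b c d hbc had]
  -- the three terms of the Bianchi identity are equal
  linarith [T.bianchi a b c d, hanti b a c d, T.antisymm_fst a b c d, hanti a b c d,
    T.antisymm_fst a c b d]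

variable {T}

lemma CalRNonneg.R_pair_nonneg (hT : T.CalRNonneg) (a b : Fin n) : 0 ≤ T.R a b a b := by
  obtain rfl | hab := eq_or_ne a b
  · rw [R_self_left]
  · have h := hT _ (isSymm_Esym a b) (trace_Esym hab)
    rw [inp_calR_Esym_self T hab] at h
    linarith

lemma CalRNonneg.ricci_self_nonneg (hT : T.CalRNonneg) (a : Fin n) : 0 ≤ ricci T a a :=
  Finset.sum_nonneg fun b _ => hT.R_pair_nonneg a b

lemma CalRNonneg.scalCurv_nonneg (hT : T.CalRNonneg) : 0 ≤ scalCurv T :=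
  Finset.sum_nonneg fun a _ => hT.ricci_self_nonneg a

lemma CalRNonneg.R_pair_eq_zero_of_scalCurv_eq_zero (hT : T.CalRNonneg) (hs : scalCurv T = 0)
    (a b : Fin n) : T.R a b a b = 0 := by
  have hric : ricci T a a = 0 :=
    (Finset.sum_eq_zero_iff_of_nonneg fun c _ => hT.ricci_self_nonneg c).mp hs a
      (Finset.mem_univ a)
  exact (Finset.sum_eq_zero_iff_of_nonneg fun c _ => hT.R_pair_nonneg a c).mp hric b
    (Finset.mem_univ b)

lemma CalRNonneg.inp_calR_add_inp_calR_eq_zero (hT : T.CalRNonneg)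
    {x y : Matrix (Fin n) (Fin n) ℝ} (hxs : x.IsSymm) (hxt : Matrix.trace x = 0)
    (hys : y.IsSymm) (hyt : Matrix.trace y = 0)
    (hxx : inp (calR T x) x = 0) (hyy : inp (calR T y) y = 0) :
    inp (calR T x) y + inp (calR T y) x = 0 := by
  have hplus := hT (x + y) (hxs.add hys) (by rw [Matrix.trace_add, hxt, hyt, add_zero])
  have hminus := hT (x - y) (hxs.sub hys) (by rw [Matrix.trace_sub, hxt, hyt, sub_zero])
  rw [calR_add, inp_add_left, inp_add_right, inp_add_right] at hplus
  rw [calR_sub, inp_sub_left, inp_sub_right, inp_sub_right] at hminus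
  linarith

lemma CalRNonneg.R_add_R_swap_middle_eq_zero (hT : T.CalRNonneg) (hs : scalCurv T = 0)
    {a b c d : Fin n} (hbc : b ≠ c) (had : a ≠ d) : T.R a b c d + T.R a c b d = 0 := by
  have h := hT.inp_calR_add_inp_calR_eq_zero (isSymm_Esym b c) (trace_Esym hbc)
    (isSymm_Esym a d) (trace_Esym had)
    (by rw [inp_calR_Esym_self T hbc, hT.R_pair_eq_zero_of_scalCurv_eq_zero hs, mul_zero])
    (by rw [inp_calR_Esym_self T had, hT.R_pair_eq_zero_of_scalCurv_eq_zero hs, mul_zero])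
  rw [inp_calR_Esym T _ _ had, inp_calR_Esym T _ _ hbc, T.R_swap_pairs a b c d,
    T.pair_symm a c b d] at h
  linarith

lemma CalRNonneg.eq_zero_of_scalCurv_eq_zero (hT : T.CalRNonneg) (hs : scalCurv T = 0) :
    ∀ a b c d, T.R a b c d = 0 :=
  T.eq_zero_of_R_add_R_swap_middle fun _ _ _ _ hbc had =>
    hT.R_add_R_swap_middle_eq_zero hs hbc had

lemma CalRNonneg.eigenvalue_nonneg (hT : T.CalRNonneg) {S : Matrix (Fin n) (Fin n) ℝ} {lam : ℝ}
    (hs : S.IsSymm) (ht : Matrix.trace S = 0) (hSS : inp S S = 1) (heig : calR T S = lam • S) :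
    0 ≤ lam := by
  simpa [heig, inp_smul_left, hSS] using hT S hs ht

lemma CalRNonneg.scalCurv_eq_zero_of_weitzenboeck (hT : T.CalRNonneg) {p : ℕ} (hp : 1 ≤ p)
    (hpn : 2 * p ≤ n) {D : ℕ} (S : Fin D → Matrix (Fin n) (Fin n) ℝ) {lam : Fin D → ℝ}
    (hlam : ∀ α, 0 ≤ lam α)
    (hW : ∑ α, lam α * sqNormActVolForm p (S α) +
      (p * ((n : ℝ) - 2 * p) / n) * partialRicciTrace p T +
      ((p : ℝ) ^ 2 / (n : ℝ) ^ 2) * scalCurv T = 0) :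
    scalCurv T = 0 := by
  have hpR : (1 : ℝ) ≤ p := by exact_mod_cast hp
  have hpnR : 2 * (p : ℝ) ≤ n := by exact_mod_cast hpn
  have hA : 0 ≤ ∑ α, lam α * sqNormActVolForm p (S α) :=
    Finset.sum_nonneg fun α _ => mul_nonneg (hlam α) (sqNormActVolForm_nonneg p (S α))
  have hB : 0 ≤ (p * ((n : ℝ) - 2 * p) / n) * partialRicciTrace p T := by
    refine mul_nonneg (div_nonneg (mul_nonneg (by linarith) (by linarith)) (by linarith))
      (Finset.sum_nonneg fun j _ => ?_)
    split_ifs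
    exacts [hT.ricci_self_nonneg j, le_rfl]
  have hC : 0 < (p : ℝ) ^ 2 / (n : ℝ) ^ 2 := div_pos (by positivity) (by nlinarith)
  nlinarith [hT.scalCurv_nonneg]

lemma CalRNonneg.eq_zero_of_weitzenboeck (hT : T.CalRNonneg) {p : ℕ} (hp : 1 ≤ p)
    (hpn : 2 * p ≤ n) {D : ℕ} (S : Fin D → Matrix (Fin n) (Fin n) ℝ) (lam : Fin D → ℝ)
    (hS_symm : ∀ α, (S α).IsSymm) (hS_tr : ∀ α, Matrix.trace (S α) = 0)
    (hS_norm : ∀ α, inp (S α) (S α) = 1) (hS_eig : ∀ α, calR T (S α) = lam α • S α)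
    (hW : ∑ α, lam α * sqNormActVolForm p (S α) +
      (p * ((n : ℝ) - 2 * p) / n) * partialRicciTrace p T +
      ((p : ℝ) ^ 2 / (n : ℝ) ^ 2) * scalCurv T = 0) :
    ∀ a b c d, T.R a b c d = 0 :=
  hT.eq_zero_of_scalCurv_eq_zero <| hT.scalCurv_eq_zero_of_weitzenboeck hp hpn S
    (fun α => hT.eigenvalue_nonneg (hS_symm α) (hS_tr α) (hS_norm α) (hS_eig α)) hW

end CurvTensor

theorem flat_of_product_signed_calR_general (n p : ℕ) (hp1 : 1 ≤ p) (hpn : 2 * p ≤ n)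
    (T : CurvTensor n)
    (hsign :
      (∀ h : Matrix (Fin n) (Fin n) ℝ, h.IsSymm → Matrix.trace h = 0 → 0 ≤ inp (calR T h) h) ∨
      (∀ h : Matrix (Fin n) (Fin n) ℝ, h.IsSymm → Matrix.trace h = 0 → inp (calR T h) h ≤ 0))
    (D : ℕ) (S : Fin D → Matrix (Fin n) (Fin n) ℝ) (lam : Fin D → ℝ)
    (hS_symm : ∀ α, (S α).IsSymm) (hS_tr : ∀ α, Matrix.trace (S α) = 0)
    (hS_orth : ∀ α β, inp (S α) (S β) = if α = β then 1 else 0)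
    (hS_eig : ∀ α, calR T (S α) = lam α • S α)
    (hWeitzenboeck :
      (∑ α, lam α *
        ((∑ m : Fin n, if (m : ℕ) < p then S α m m else 0) ^ 2 +
          ∑ m : Fin n, ∑ k : Fin n,
            if (m : ℕ) < p ∧ p ≤ (k : ℕ) then (S α m k) ^ 2 else 0)) +
      (p * ((n : ℝ) - 2 * p) / n) * (∑ j : Fin n, if (j : ℕ) < p then ricci T j j else 0) +
      ((p : ℝ) ^ 2 / (n : ℝ) ^ 2) * scalCurv T = 0) :
    ∀ i j k l, T.R i j k l = 0 := by
  change ∑ α, lam α * sqNormActVolForm p (S α) + _ * partialRicciTrace p T + _ = 0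
    at hWeitzenboeck
  have hS_norm : ∀ α, inp (S α) (S α) = 1 := fun α => by simpa using hS_orth α α
  rcases hsign with hT | hT
  · exact CurvTensor.CalRNonneg.eq_zero_of_weitzenboeck hT hp1 hpn S lam hS_symm hS_tr hS_norm hS_eig
      hWeitzenboeck
  · have hW : ∑ α, -lam α * sqNormActVolForm p (S α) +
        (p * ((n : ℝ) - 2 * p) / n) * partialRicciTrace p (-T) +
        ((p : ℝ) ^ 2 / (n : ℝ) ^ 2) * scalCurv (-T) = 0 := by
      simp only [neg_mul, Finset.sum_neg_distrib, T.partialRicciTrace_neg, T.scalCurv_neg]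
      linarith
    intro i j k l
    simpa using (T.calRNonneg_neg hT).eq_zero_of_weitzenboeck hp1 hpn S (-lam) hS_symm hS_tr
      hS_norm (fun α => by rw [T.calR_neg, hS_eig, Pi.neg_apply, neg_smul]) hW i j k l

/-- If the curvature operator of the second kind of an algebraic curvature tensor with
product structure `V = V₁ ⊕ V₂` is nonnegative or nonpositive, its kernel contains all
mixed tensors `eⁱ⊗eʲ + eʲ⊗eⁱ` of the splitting, and the Weitzenböck curvature term of the
volume form `ω = e¹∧…∧eᵖ` of `V₁` vanishes (expressed, via an orthonormal eigenbasis
`{S_α}` of `𝓡` with eigenvalues `λ_α`, as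
`∑_α λ_α |S_α ω|² + (p(n−2p)/n) ∑_{j≤p} Ric_{jj} + (p²/n²) scal = 0`, where
`|S_α ω|² = (∑_{m≤p} (S_α)_{mm})² + ∑_{m≤p, k>p} (S_α)_{mk}²`), then the curvature tensor
is zero. -/
theorem flat_of_product_signed_calR (n p : ℕ) (hp1 : 1 ≤ p) (hpn : 2 * p ≤ n)
    (T : CurvTensor n)
    (hprod : ∀ i j k l : Fin n, (j : ℕ) < p → p ≤ (k : ℕ) → T.R i j k l = 0)
    (hsign :
      (∀ h : Matrix (Fin n) (Fin n) ℝ, h.IsSymm → Matrix.trace h = 0 → 0 ≤ inp (calR T h) h) ∨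
      (∀ h : Matrix (Fin n) (Fin n) ℝ, h.IsSymm → Matrix.trace h = 0 → inp (calR T h) h ≤ 0))
    (hker : ∀ i j : Fin n, (i : ℕ) < p → p ≤ (j : ℕ) → calR T (Esym i j) = 0)
    (D : ℕ) (S : Fin D → Matrix (Fin n) (Fin n) ℝ) (lam : Fin D → ℝ)
    (hS_symm : ∀ α, (S α).IsSymm) (hS_tr : ∀ α, Matrix.trace (S α) = 0)
    (hS_orth : ∀ α β, inp (S α) (S β) = if α = β then 1 else 0)
    (hS_eig : ∀ α, calR T (S α) = lam α • S α)
    (hS_span : ∀ h : Matrix (Fin n) (Fin n) ℝ, h.IsSymm → Matrix.trace h = 0 →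
      h ∈ Submodule.span ℝ (Set.range S))
    (hWeitzenboeck :
      (∑ α, lam α *
        ((∑ m : Fin n, if (m : ℕ) < p then S α m m else 0) ^ 2 +
          ∑ m : Fin n, ∑ k : Fin n,
            if (m : ℕ) < p ∧ p ≤ (k : ℕ) then (S α m k) ^ 2 else 0)) +
      (p * ((n : ℝ) - 2 * p) / n) * (∑ j : Fin n, if (j : ℕ) < p then ricci T j j else 0) +
      ((p : ℝ) ^ 2 / (n : ℝ) ^ 2) * scalCurv T = 0) :
    ∀ i j k l, T.R i j k l = 0 :=
  flat_of_product_signed_calR_general n p hp1 hpn T hsign D S lam hS_symm hS_tr hS_orth hS_eig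
    hWeitzenboeck
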